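/- arXiv:math/0512610 — 7 statements merged into one kernel-verified Lean document; each statement's English description precedes it below -/
import Mathlib

section
/- For every n ≥ 1, every integer m with 1 ≤ m ≤ n−1, and every complex vector t = (t_α) indexed by the m-element subsets α of {1,…,n}, one has t*Ψ_m t ≥ 0; that is, the Hermitian form Ψ_m is positive semidefinite. -/
/-
For `k ≤ m` and a `k`-set `γ` put `P_k γ = ∑_{α ⊇ γ, #α = m} t α`. Expanding the squares,
`∑_γ |P_k γ|² - |∑_γ P_k γ|² / C(n,k)` is the form whose coefficient on pairs with
`#(α ∩ β) = j` is `C(j,k) - C(m,k)² / C(n,k)`, and it is nonnegative by Cauchy–Schwarz.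
The identity `∑_{k ≤ j} C(j,k) / C(m,k) = (m+1) / (m-j+1)` (hockey stick, after
`C(j,k) / C(m,k) = C(m-k,m-j) / C(m,j)`) writes the coefficient of `Ψ_m` as
`∑_k (n-m+1) / C(m,k) · (C(j,k) - C(m,k)² / C(n,k))`, so `Ψ_m` is a nonnegative combination
of these forms.
-/

open scoped ComplexOrder

/-- The Hermitian form `Ψ_m` on complex vectors indexed by subsets of `{1,…,n}`
(only the values on `m`-element subsets matter). -/
noncomputable def psiForm (n m : ℕ) (t : Finset (Fin n) → ℂ) : ℂ :=
  ∑ j ∈ Finset.range (m + 1),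
    ((m : ℂ) * ((n : ℂ) - m) -
        ((m : ℂ) + 1) * ((n : ℂ) - m + 1) * ((m : ℂ) - j) / ((m : ℂ) - j + 1)) *
      ∑ α ∈ Finset.univ.powersetCard m, ∑ β ∈ Finset.univ.powersetCard m,
        if (α ∩ β).card = j then (starRingEnd ℂ) (t α) * t β else 0

open Finset ComplexConjugate

def psiCoeff (K : Type*) [Field K] (n m j : ℕ) : K :=
  (m : K) * ((n : K) - m) - ((m : K) + 1) * ((n : K) - m + 1) * ((m : K) - j) / ((m : K) - j + 1)

section Binomial

variable {K : Type*} [Field K] [CharZero K]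

theorem sum_range_sub_choose {j m : ℕ} (hjm : j ≤ m) :
    ∑ k ∈ range (j + 1), (m - k).choose (m - j) = (m + 1).choose j := by
  rw [← sum_range_reflect]
  have hterm : ∀ i ∈ range (j + 1),
      (m - (j + 1 - 1 - i)).choose (m - j) = (i + (m - j)).choose (m - j) := by
    intro i hi
    rw [show m - (j + 1 - 1 - i) = i + (m - j) by grind]
  rw [sum_congr rfl hterm, Nat.sum_range_add_choose, show j + (m - j) + 1 = m + 1 by omega]
  exact Nat.choose_symm_of_eq_add (by omega)

theorem sum_range_choose_div_choose {j m : ℕ} (hjm : j ≤ m) :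
    ∑ k ∈ range (j + 1), (j.choose k : K) / m.choose k = (m + 1) / (m - j + 1) := by
  have hmj : (m.choose j : K) ≠ 0 := Nat.cast_ne_zero.2 (Nat.choose_pos hjm).ne'
  have hterm : ∀ k ∈ range (j + 1),
      (j.choose k : K) / m.choose k = ((m - k).choose (m - j) : K) / m.choose j := by
    intro k hk
    have hkj : k ≤ j := Nat.lt_succ_iff.1 (mem_range.1 hk)
    have hmk : (m.choose k : K) ≠ 0 := Nat.cast_ne_zero.2 (Nat.choose_pos (hkj.trans hjm)).ne'
    rw [div_eq_div_iff hmk hmj,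
      ← Nat.choose_symm_of_eq_add (show m - k = (j - k) + (m - j) by omega)]
    exact_mod_cast (by rw [mul_comm, Nat.choose_mul hkj, mul_comm] :
      j.choose k * m.choose j = (m - k).choose (j - k) * m.choose k)
  have hsucc : ((m + 1).choose j : K) * (m - j + 1) = (m + 1) * m.choose j := by
    have := congrArg (Nat.cast : ℕ → K) (Nat.choose_mul_succ_eq m j)
    push_cast [Nat.cast_sub (hjm.trans m.le_succ)] at this
    linear_combination -this
  have hd : (m - j + 1 : K) ≠ 0 := by
    rw [← Nat.cast_sub hjm]; exact_mod_cast (m - j).succ_ne_zero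
  rw [sum_congr rfl hterm, ← sum_div, ← Nat.cast_sum, sum_range_sub_choose hjm,
    div_eq_div_iff hmj hd, hsucc]

theorem psiCoeff_eq_sum {n m j : ℕ} (hmn : m ≤ n) (hjm : j ≤ m) :
    psiCoeff K n m j = ∑ k ∈ range (m + 1),
      ((n - m + 1 : ℕ) : K) / m.choose k * (j.choose k - (m.choose k : K) ^ 2 / n.choose k) := by
  have hj : ∑ k ∈ range (m + 1), (j.choose k : K) / m.choose k = (m + 1) / (m - j + 1) := by
    rw [← sum_range_choose_div_choose hjm]
    refine (sum_subset (range_subset_range.2 (by omega)) fun k _ hk => ?_).symm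
    rw [Nat.choose_eq_zero_of_lt (by simpa using hk), Nat.cast_zero, zero_div]
  have hterm : ∀ k ∈ range (m + 1),
      ((n - m + 1 : ℕ) : K) / m.choose k * (j.choose k - (m.choose k : K) ^ 2 / n.choose k)
        = ((n - m + 1 : ℕ) : K) * ((j.choose k : K) / m.choose k)
          - ((n - m + 1 : ℕ) : K) * ((m.choose k : K) / n.choose k) := by
    intro k hk
    have hmk : (m.choose k : K) ≠ 0 :=
      Nat.cast_ne_zero.2 (Nat.choose_pos (Nat.lt_succ_iff.1 (mem_range.1 hk))).ne'
    field_simp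
  have hd : ((n : K) - m + 1) ≠ 0 := by
    rw [← Nat.cast_sub hmn]; exact_mod_cast (n - m).succ_ne_zero
  have hd' : ((m : K) - j + 1) ≠ 0 := by
    rw [← Nat.cast_sub hjm]; exact_mod_cast (m - j).succ_ne_zero
  rw [sum_congr rfl hterm, sum_sub_distrib, ← mul_sum, ← mul_sum, hj,
    sum_range_choose_div_choose hmn, psiCoeff]
  push_cast [Nat.cast_sub hmn]
  field_simp
  ring

end Binomial

theorem conj_sum_mul_sum_div_card_le {κ : Type*} (s : Finset κ) (f : κ → ℂ) :
    conj (∑ i ∈ s, f i) * (∑ i ∈ s, f i) / #s ≤ ∑ i ∈ s, conj (f i) * f i := by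
  have hcs : ‖∑ i ∈ s, f i‖ ^ 2 / #s ≤ ∑ i ∈ s, ‖f i‖ ^ 2 := by
    refine div_le_of_le_mul₀ (Nat.cast_nonneg _) (sum_nonneg fun i _ => sq_nonneg _) ?_
    calc ‖∑ i ∈ s, f i‖ ^ 2 ≤ (∑ i ∈ s, ‖f i‖) ^ 2 := by gcongr; exact norm_sum_le s f
      _ ≤ #s * ∑ i ∈ s, ‖f i‖ ^ 2 := sq_sum_le_card_mul_sum_sq
      _ = (∑ i ∈ s, ‖f i‖ ^ 2) * #s := mul_comm _ _
  simp only [Complex.conj_mul']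
  exact_mod_cast hcs

section Intersections

variable {ι : Type*} [Fintype ι] [DecidableEq ι]

theorem card_powersetCard_univ_filter_subset (s : Finset ι) (k : ℕ) :
    #{γ ∈ univ.powersetCard k | γ ⊆ s} = (#s).choose k := by
  rw [← card_powersetCard]
  congr 1
  ext γ
  simp only [mem_filter, mem_powersetCard, subset_univ, true_and]
  tauto

theorem sum_powersetCard_univ_ite_subset {R : Type*} [AddCommMonoid R] (s : Finset ι) (k : ℕ)
    (c : R) :
    ∑ γ ∈ univ.powersetCard k, (if γ ⊆ s then c else 0) = (#s).choose k • c := by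
  rw [← sum_filter, sum_const, card_powersetCard_univ_filter_subset]

theorem sum_powersetCard_sum_superset {R : Type*} [AddCommMonoid R] (A : Finset (Finset ι))
    (f : Finset ι → R) (k : ℕ) :
    ∑ γ ∈ univ.powersetCard k, ∑ α ∈ A with γ ⊆ α, f α = ∑ α ∈ A, (#α).choose k • f α := by
  simp only [sum_filter]
  rw [sum_comm]
  exact sum_congr rfl fun α _ => sum_powersetCard_univ_ite_subset α k (f α)

theorem sum_powersetCard_mul_sum_superset {R : Type*} [CommSemiring R] (A : Finset (Finset ι))
    (f g : Finset ι → R) (k : ℕ) :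
    ∑ γ ∈ univ.powersetCard k, (∑ α ∈ A with γ ⊆ α, f α) * (∑ β ∈ A with γ ⊆ β, g β)
      = ∑ α ∈ A, ∑ β ∈ A, (#(α ∩ β)).choose k • (f α * g β) := by
  simp only [sum_filter, sum_mul_sum, ite_zero_mul_ite_zero, ← subset_inter_iff]
  rw [sum_comm]
  refine sum_congr rfl fun α _ => ?_
  rw [sum_comm]
  exact sum_congr rfl fun β _ => sum_powersetCard_univ_ite_subset _ k _

def intersectionForm (m : ℕ) (w : ℕ → ℂ) (t : Finset ι → ℂ) : ℂ :=
  ∑ α ∈ univ.powersetCard m, ∑ β ∈ univ.powersetCard m, w #(α ∩ β) * (conj (t α) * t β)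

theorem intersectionForm_congr {m : ℕ} {w w' : ℕ → ℂ} (h : ∀ j ≤ m, w j = w' j)
    (t : Finset ι → ℂ) : intersectionForm m w t = intersectionForm m w' t := by
  refine sum_congr rfl fun α hα => sum_congr rfl fun β _ => ?_
  rw [h]
  exact (card_le_card inter_subset_left).trans (mem_powersetCard_univ.1 hα).le

theorem intersectionForm_sum {κ : Type*} (m : ℕ) (s : Finset κ) (c : κ → ℂ) (w : κ → ℕ → ℂ)
    (t : Finset ι → ℂ) :
    intersectionForm m (fun j => ∑ k ∈ s, c k * w k j) t
      = ∑ k ∈ s, c k * intersectionForm m (w k) t := by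
  simp only [intersectionForm, mul_sum, sum_mul, mul_assoc]
  conv_rhs => rw [sum_comm]
  refine sum_congr rfl fun α _ => ?_
  rw [sum_comm]

theorem intersectionForm_choose_sub_nonneg (m k : ℕ) (t : Finset ι → ℂ) :
    0 ≤ intersectionForm m
      (fun j => j.choose k - (m.choose k : ℂ) ^ 2 / (Fintype.card ι).choose k) t := by
  set A := (univ : Finset ι).powersetCard m
  set P : Finset ι → ℂ := fun γ => ∑ α ∈ A with γ ⊆ α, t α
  have hsq : ∑ γ ∈ univ.powersetCard k, conj (P γ) * P γ
      = ∑ α ∈ A, ∑ β ∈ A, ((#(α ∩ β)).choose k : ℂ) * (conj (t α) * t β) := by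
    simp only [P, map_sum, sum_powersetCard_mul_sum_superset, nsmul_eq_mul]
  have hsum : ∑ γ ∈ univ.powersetCard k, P γ = m.choose k * ∑ α ∈ A, t α := by
    simp only [P, sum_powersetCard_sum_superset, mul_sum, nsmul_eq_mul]
    exact sum_congr rfl fun α hα => by rw [mem_powersetCard_univ.1 hα]
  have hmean : ∑ α ∈ A, ∑ β ∈ A,
      (m.choose k : ℂ) ^ 2 / (Fintype.card ι).choose k * (conj (t α) * t β)
        = conj (∑ γ ∈ univ.powersetCard k, P γ) * (∑ γ ∈ univ.powersetCard k, P γ)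
          / #((univ : Finset ι).powersetCard k) := by
    rw [hsum, card_powersetCard, card_univ, map_mul, Complex.conj_natCast, map_sum,
      mul_mul_mul_comm, ← sq, mul_div_right_comm, sum_mul_sum, mul_sum]
    simp only [mul_sum]
  rw [intersectionForm]
  simp only [sub_mul, sum_sub_distrib]
  rw [sub_nonneg, ← hsq, hmean]
  exact conj_sum_mul_sum_div_card_le _ P

end Intersections

theorem psiForm_eq_intersectionForm (n m : ℕ) (t : Finset (Fin n) → ℂ) :
    psiForm n m t = intersectionForm m (psiCoeff ℂ n m) t := by
  simp only [psiForm, intersectionForm, mul_sum, mul_ite, mul_zero]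
  rw [sum_comm]
  refine sum_congr rfl fun α hα => ?_
  rw [sum_comm]
  refine sum_congr rfl fun β _ => ?_
  have hmem : #(α ∩ β) ∈ range (m + 1) := mem_range.2 <| Nat.lt_succ_of_le <|
    (card_le_card inter_subset_left).trans (mem_powersetCard_univ.1 hα).le
  rw [sum_ite_eq, if_pos hmem]
  rfl

theorem stmt_4_general {n : ℕ} (m : ℕ) (hmn : m ≤ n - 1)
    (t : Finset (Fin n) → ℂ) :
    0 ≤ psiForm n m t := by
  have hmn' : m ≤ n := hmn.trans (Nat.sub_le n 1)
  rw [psiForm_eq_intersectionForm, intersectionForm_congr (fun j hj => psiCoeff_eq_sum hmn' hj),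
    intersectionForm_sum]
  refine sum_nonneg fun k _ => mul_nonneg (div_nonneg (Nat.cast_nonneg _) (Nat.cast_nonneg _)) ?_
  simpa using intersectionForm_choose_sub_nonneg (ι := Fin n) m k t

theorem stmt_4 {n : ℕ} (hn : 1 ≤ n) (m : ℕ) (hm1 : 1 ≤ m) (hmn : m ≤ n - 1)
    (t : Finset (Fin n) → ℂ) :
    0 ≤ psiForm n m t :=
  stmt_4_general m hmn t
end

section
/- For all integers n, m with 1 ≤ m ≤ n−1, the following binomial identity holds: Σ_{j=0}^{m} ( m(n−m) − (m+1)(n−m+1)·(m−j)/(m−j+1) ) · C(m,j) · C(n−m, m−j) = 0. -/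
/-! With `b = n - m`, the sum telescopes: for `F j = j * C(m, j) * C(b, m + 1 - j)` the `j`-th
summand equals `F j - F (j + 1)`, which follows from `(r + 1) * C(b, r + 1) = (b - r) * C(b, r)`
applied to both binomials with `r = m - j`. Hence the sum is `F 0 - F (m + 1) = 0`. -/

open Finset

theorem Nat.cast_succ_mul_choose_succ {R : Type*} [CommRing R] (b r : ℕ) :
    ((r : R) + 1) * b.choose (r + 1) = ((b : R) - r) * b.choose r := by
  rcases le_or_gt r b with h | h
  · have h' := congrArg (Nat.cast : ℕ → R) (Nat.choose_succ_right_eq b r)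
    push_cast [Nat.cast_sub h] at h'
    linear_combination h'
  · simp [Nat.choose_eq_zero_of_lt h, Nat.choose_eq_zero_of_lt (Nat.lt_succ_of_lt h)]

section Telescoping

variable {K : Type*} [Field K] [CharZero K]

lemma summand_eq_sub_succ (m b j : ℕ) (hj : j ≤ m) :
    ((m : K) * b - ((m : K) + 1) * ((b : K) + 1) * ((m : K) - j) / ((m : K) - j + 1)) *
        m.choose j * b.choose (m - j) =
      (j : K) * m.choose j * b.choose (m + 1 - j) -
        ((j + 1 : ℕ) : K) * m.choose (j + 1) * b.choose (m + 1 - (j + 1)) := by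
  obtain ⟨r, rfl⟩ : ∃ r, m = j + r := ⟨m - j, by omega⟩
  have hr : (r : K) + 1 ≠ 0 := Nat.cast_add_one_ne_zero r
  have hm := Nat.cast_succ_mul_choose_succ (R := K) (j + r) j
  have hb := Nat.cast_succ_mul_choose_succ (R := K) b r
  rw [show j + r - j = r by omega, show j + r + 1 - j = r + 1 by omega,
    show j + r + 1 - (j + 1) = r by omega]
  push_cast at hm ⊢
  field_simp
  linear_combination (r + 1 : K) * b.choose r * hm - (j : K) * (j + r).choose j * hb

theorem sum_range_weighted_choose_mul_choose_eq_zero (m b : ℕ) :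
    ∑ j ∈ range (m + 1),
      ((m : K) * b - ((m : K) + 1) * ((b : K) + 1) * ((m : K) - j) / ((m : K) - j + 1)) *
        m.choose j * b.choose (m - j) = 0 := by
  rw [sum_congr rfl fun j hj => summand_eq_sub_succ m b j (Nat.lt_succ_iff.mp (mem_range.mp hj)),
    sum_range_sub' (fun j => (j : K) * m.choose j * b.choose (m + 1 - j))]
  simp

end Telescoping

theorem stmt_5_general (n m : ℕ) (hmn : m ≤ n - 1) :
    ∑ j ∈ Finset.range (m + 1),
      ((m : ℚ) * ((n : ℚ) - m) -
          ((m : ℚ) + 1) * ((n : ℚ) - m + 1) * ((m : ℚ) - j) / ((m : ℚ) - j + 1)) *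
        (m.choose j : ℚ) * ((n - m).choose (m - j) : ℚ) = 0 := by
  rw [← Nat.cast_sub (hmn.trans (Nat.sub_le n 1))]
  exact sum_range_weighted_choose_mul_choose_eq_zero m (n - m)

theorem stmt_5 (n m : ℕ) (hm1 : 1 ≤ m) (hmn : m ≤ n - 1) :
    ∑ j ∈ Finset.range (m + 1),
      ((m : ℚ) * ((n : ℚ) - m) -
          ((m : ℚ) + 1) * ((n : ℚ) - m + 1) * ((m : ℚ) - j) / ((m : ℚ) - j + 1)) *
        (m.choose j : ℚ) * ((n - m).choose (m - j) : ℚ) = 0 :=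
  stmt_5_general n m hmn
end

section
/- For any n×n real matrix A and any integer m with 1 ≤ m ≤ n−1, the m-th Newton inequality c_m(A)² ≥ c_{m−1}(A)·c_{m+1}(A) holds if and only if m(n−m) · Σ_{j=0}^{m} S_{m,m,j}(A) ≥ (m+1)(n−m+1) · Σ_{j=0}^{m−1} S_{m+1,m−1,j}(A). -/
/-
Summing `S_{m₁,m₂,j}` over every possible intersection size `j` removes the constraint on
`α ∩ β`, so both sides of the claimed inequality are products `E_{m₁} E_{m₂}` of sums of
principal minors. Since `c_j = E_j / C(n,j)`, the two inequalities differ by the positive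
factor `m(n-m) C(n,m)² = (m+1)(n-m+1) C(n,m-1) C(n,m+1)`.
-/

noncomputable def pminor {ι : Type*} [Fintype ι] [DecidableEq ι]
    (A : Matrix ι ι ℝ) (α : Finset ι) : ℝ :=
  (A.submatrix ((↑) : α → ι) ((↑) : α → ι)).det

noncomputable def Sfun {ι : Type*} [Fintype ι] [DecidableEq ι]
    (A : Matrix ι ι ℝ) (m₁ m₂ k : ℕ) : ℝ :=
  ∑ α ∈ Finset.univ.powersetCard m₁, ∑ β ∈ Finset.univ.powersetCard m₂,
    if (α ∩ β).card = k then pminor A α * pminor A β else 0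

noncomputable def cfun {n : ℕ} (A : Matrix (Fin n) (Fin n) ℝ) (j : ℕ) : ℝ :=
  (∑ α ∈ Finset.univ.powersetCard j, pminor A α) / (n.choose j)

open Finset

section PrincipalMinors

variable {ι : Type*} [Fintype ι] [DecidableEq ι]

noncomputable def pminorSum (A : Matrix ι ι ℝ) (k : ℕ) : ℝ :=
  ∑ α ∈ univ.powersetCard k, pminor A α

lemma sum_range_Sfun (A : Matrix ι ι ℝ) {m₁ m₂ N : ℕ} (h : m₁ < N ∨ m₂ < N) :
    ∑ j ∈ range N, Sfun A m₁ m₂ j = pminorSum A m₁ * pminorSum A m₂ := by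
  unfold Sfun pminorSum
  rw [sum_mul_sum, sum_comm]
  refine sum_congr rfl fun α hα => ?_
  rw [sum_comm]
  refine sum_congr rfl fun β hβ => ?_
  have hcard : (α ∩ β).card < N := by
    rcases h with h | h
    · exact (card_le_card inter_subset_left).trans_lt ((mem_powersetCard_univ.mp hα) ▸ h)
    · exact (card_le_card inter_subset_right).trans_lt ((mem_powersetCard_univ.mp hβ) ▸ h)
  rw [sum_ite_eq, if_pos (mem_range.mpr hcard)]

end PrincipalMinors

lemma cast_choose_mul_choose {n m : ℕ} (hm : 1 ≤ m) (hmn : m ≤ n) :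
    (m : ℝ) * (n - m) * ((n.choose m : ℝ) * n.choose m) =
      ((m : ℝ) + 1) * (n - m + 1) * ((n.choose (m - 1) : ℝ) * n.choose (m + 1)) := by
  have lower : (n.choose m : ℝ) * m = n.choose (m - 1) * (n - m + 1) := by
    have h := Nat.choose_succ_right_eq n (m - 1)
    rw [Nat.sub_add_cancel hm, show n - (m - 1) = n - m + 1 by omega] at h
    rw [← Nat.cast_sub hmn]
    exact_mod_cast h
  have upper : (n.choose (m + 1) : ℝ) * (m + 1) = n.choose m * (n - m) := by
    have h := Nat.choose_succ_right_eq n m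
    rw [← Nat.cast_sub hmn]
    exact_mod_cast h
  linear_combination ((n.choose m : ℝ) * (n - m)) * lower -
    ((n.choose (m - 1) : ℝ) * (n - m + 1)) * upper

lemma div_mul_div_le_sq_div_iff {a b c d d₁ d₂ w w' : ℝ} (hd : 0 < d) (hd₁ : 0 < d₁)
    (hd₂ : 0 < d₂) (hw' : 0 < w') (hweight : w * (d * d) = w' * (d₁ * d₂)) :
    a * c / (d₁ * d₂) ≤ b ^ 2 / d ^ 2 ↔ w' * (a * c) ≤ w * b ^ 2 := by
  rw [div_le_div_iff₀ (by positivity) (by positivity), ← mul_le_mul_iff_of_pos_left hw',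
    show w' * (a * c * d ^ 2) = w' * (a * c) * d ^ 2 by ring,
    show w' * (b ^ 2 * (d₁ * d₂)) = w * b ^ 2 * d ^ 2 by linear_combination -b ^ 2 * hweight,
    mul_le_mul_iff_of_pos_right (pow_pos hd 2)]

theorem stmt_8 {n : ℕ} (A : Matrix (Fin n) (Fin n) ℝ)
    (m : ℕ) (hm1 : 1 ≤ m) (hmn : m ≤ n - 1) :
    cfun A m ^ 2 ≥ cfun A (m - 1) * cfun A (m + 1) ↔
      (m : ℝ) * ((n : ℝ) - m) * ∑ j ∈ Finset.range (m + 1), Sfun A m m j ≥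
        ((m : ℝ) + 1) * ((n : ℝ) - m + 1) *
          ∑ j ∈ Finset.range m, Sfun A (m + 1) (m - 1) j := by
  have hn : m + 1 ≤ n := by omega
  have choose_pos : ∀ k ≤ n, (0 : ℝ) < n.choose k := fun k hk => by
    exact_mod_cast Nat.choose_pos hk
  have weight_pos : (0 : ℝ) < (m + 1) * (n - m + 1) := by
    have : (m : ℝ) + 1 ≤ n := by exact_mod_cast hn
    nlinarith
  rw [sum_range_Sfun A (Or.inl m.lt_succ_self), sum_range_Sfun A (Or.inr (by omega))]
  change (pminorSum A m / n.choose m) ^ 2 ≥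
      pminorSum A (m - 1) / n.choose (m - 1) * (pminorSum A (m + 1) / n.choose (m + 1)) ↔ _
  rw [div_pow, div_mul_div_comm, ge_iff_le, ge_iff_le, ← sq, mul_comm (pminorSum A (m + 1))]
  exact div_mul_div_le_sq_div_iff (choose_pos m (by omega)) (choose_pos _ (by omega))
    (choose_pos _ hn) weight_pos (cast_choose_mul_choose hm1 (by omega))
end

section
/- Let A be any n×n real matrix and let m₁, m₂, k be nonnegative integers with k ≤ min(m₁, m₂) and m₁ + m₂ − k < n. Then n · S_{m₁,m₂,k}(I_{n−1}) · S_{m₁,m₂,k}(A) = S_{m₁,m₂,k}(I_n) · Σ_{γ} S_{m₁,m₂,k}(A(γ)), where the sum runs over all subsets γ of {1,…,n} of size n−1 and A(γ) denotes the principal submatrix of A with rows and columns indexed by γ (this is the cross-multiplied form of the averaging identity S_{m₁,m₂,k}(A)/S_{m₁,m₂,k}(I_n) = (1/n) Σ_γ S_{m₁,m₂,k}(A(γ))/S_{m₁,m₂,k}(I_{n−1})). -/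
/-!
A pair `(α, β)` contributes to `S(A(γ))` exactly when `α ∪ β ⊆ γ`, and a set `s` lies in
`n - #s` of the `(n - 1)`-subsets of `{1, …, n}`. For the pairs counted by `S_{m₁,m₂,k}` one has
`#(α ∪ β) = m₁ + m₂ - k`, so `∑_γ S(A(γ)) = (n - (m₁ + m₂ - k)) S(A)` for every `A`. Comparing
this identity for `A` and for `I_n`, where every `S(I_n(γ))` equals `S(I_{n-1})`, gives the claim.
-/

open Finset

section

variable {ι κ : Type*} [Fintype ι] [DecidableEq ι] [Fintype κ] [DecidableEq κ]

lemma pminor_submatrix (A : Matrix ι ι ℝ) (f : κ ↪ ι) (α : Finset κ) :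
    pminor (A.submatrix f f) α = pminor A (α.map f) := by
  rw [pminor, pminor, ← Matrix.det_submatrix_equiv_self (α.equivMap f)]
  rfl

lemma Sfun_submatrix (A : Matrix ι ι ℝ) (f : κ ↪ ι) (m₁ m₂ k : ℕ) :
    Sfun (A.submatrix f f) m₁ m₂ k =
      ∑ α ∈ (univ.map f).powersetCard m₁, ∑ β ∈ (univ.map f).powersetCard m₂,
        if #(α ∩ β) = k then pminor A α * pminor A β else 0 := by
  simp only [Sfun, powersetCard_map, sum_map, RelEmbedding.coe_toEmbedding, mapEmbedding_apply,
    ← map_inter, card_map, pminor_submatrix]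

lemma Sfun_submatrix_equiv (A : Matrix ι ι ℝ) (e : κ ≃ ι) (m₁ m₂ k : ℕ) :
    Sfun (A.submatrix e e) m₁ m₂ k = Sfun A m₁ m₂ k := by
  simpa [map_univ_equiv, Sfun] using Sfun_submatrix A e.toEmbedding m₁ m₂ k

lemma Sfun_one_eq_of_card_eq (h : Fintype.card κ = Fintype.card ι) (m₁ m₂ k : ℕ) :
    Sfun (1 : Matrix κ κ ℝ) m₁ m₂ k = Sfun (1 : Matrix ι ι ℝ) m₁ m₂ k := by
  rw [← Sfun_submatrix_equiv (1 : Matrix ι ι ℝ) (Fintype.equivOfCardEq h),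
    Matrix.submatrix_one_equiv]

lemma Sfun_submatrix_subtype (A : Matrix ι ι ℝ) (γ : Finset ι) (m₁ m₂ k : ℕ) :
    Sfun (A.submatrix ((↑) : γ → ι) (↑)) m₁ m₂ k =
      ∑ p ∈ univ.powersetCard m₁ ×ˢ univ.powersetCard m₂ with p.1 ∪ p.2 ⊆ γ,
        if #(p.1 ∩ p.2) = k then pminor A p.1 * pminor A p.2 else 0 := by
  have hγ : univ.map (Function.Embedding.subtype (· ∈ γ)) = γ := by
    ext; simp
  have hpc : ∀ m, γ.powersetCard m = {α ∈ (univ : Finset ι).powersetCard m | α ⊆ γ} :=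
    fun m => by ext α; simp [and_comm]
  have h := Sfun_submatrix A (Function.Embedding.subtype (· ∈ γ)) m₁ m₂ k
  rw [hγ, hpc, hpc, ← sum_product', ← filter_product] at h
  simp only [union_subset_iff]
  exact h

lemma card_filter_powersetCard_card_sub_one_subset [Nonempty ι] (s : Finset ι) :
    #{γ ∈ univ.powersetCard (Fintype.card ι - 1) | s ⊆ γ} = Fintype.card ι - #s := by
  have hι := Fintype.card_pos (α := ι)
  by_cases hs : #s ≤ Fintype.card ι - 1
  · rw [card_filter_powersetCard_subset s univ _ (subset_univ s) hs, card_univ]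
    have h1 : Fintype.card ι - 1 - #s = Fintype.card ι - #s - 1 := by omega
    rw [h1, Nat.choose_symm (by omega), Nat.choose_one_right]
  · rw [show Fintype.card ι - #s = 0 by omega, card_eq_zero, filter_eq_empty_iff]
    intro γ hγ hsγ
    exact hs ((card_le_card hsγ).trans (mem_powersetCard_univ.1 hγ).le)

lemma sum_Sfun_submatrix_card_sub_one [Nonempty ι] (A : Matrix ι ι ℝ) (m₁ m₂ k : ℕ) :
    ∑ γ ∈ (univ : Finset ι).powersetCard (Fintype.card ι - 1),
        Sfun (A.submatrix (Subtype.val : γ → ι) Subtype.val) m₁ m₂ k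
      = ((Fintype.card ι - (m₁ + m₂ - k) : ℕ) : ℝ) * Sfun A m₁ m₂ k := by
  simp_rw [Sfun_submatrix_subtype, sum_filter]
  rw [sum_comm, Sfun,
    ← sum_product' (f := fun α β => if #(α ∩ β) = k then pminor A α * pminor A β else 0), mul_sum]
  refine sum_congr rfl fun p hp => ?_
  rw [← sum_filter, sum_const, card_filter_powersetCard_card_sub_one_subset, nsmul_eq_mul]
  split_ifs with hk
  · rw [mem_product, mem_powersetCard_univ, mem_powersetCard_univ] at hp
    have hunion : #(p.1 ∪ p.2) = m₁ + m₂ - k := by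
      have := card_union_add_card_inter p.1 p.2
      have := card_le_card (inter_subset_left (s₁ := p.1) (s₂ := p.2))
      omega
    rw [hunion]
  · simp

end

theorem stmt_12_general {n : ℕ} (A : Matrix (Fin n) (Fin n) ℝ)
    (m₁ m₂ k : ℕ) (hsum : m₁ + m₂ - k < n) :
    (n : ℝ) * Sfun (1 : Matrix (Fin (n - 1)) (Fin (n - 1)) ℝ) m₁ m₂ k *
        Sfun A m₁ m₂ k =
      Sfun (1 : Matrix (Fin n) (Fin n) ℝ) m₁ m₂ k *
        ∑ γ ∈ Finset.univ.powersetCard (n - 1),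
          Sfun (A.submatrix (Subtype.val : γ → Fin n) (Subtype.val : γ → Fin n)) m₁ m₂ k := by
  have : NeZero n := ⟨by omega⟩
  have hA := sum_Sfun_submatrix_card_sub_one A m₁ m₂ k
  have hI := sum_Sfun_submatrix_card_sub_one (1 : Matrix (Fin n) (Fin n) ℝ) m₁ m₂ k
  have hIγ : ∀ γ ∈ (univ : Finset (Fin n)).powersetCard (n - 1),
      Sfun ((1 : Matrix (Fin n) (Fin n) ℝ).submatrix (Subtype.val : γ → Fin n) Subtype.val) m₁ m₂ k
        = Sfun (1 : Matrix (Fin (n - 1)) (Fin (n - 1)) ℝ) m₁ m₂ k := fun γ hγ => by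
    rw [Matrix.submatrix_one _ Subtype.coe_injective]
    exact Sfun_one_eq_of_card_eq (by simpa using mem_powersetCard_univ.1 hγ) m₁ m₂ k
  rw [Fintype.card_fin] at hA hI
  rw [sum_congr rfl hIγ, sum_const, card_powersetCard, card_univ, Fintype.card_fin,
    Nat.choose_symm (by omega), Nat.choose_one_right, nsmul_eq_mul] at hI
  rw [hA]
  linear_combination Sfun A m₁ m₂ k * hI

theorem stmt_12 {n : ℕ} (A : Matrix (Fin n) (Fin n) ℝ)
    (m₁ m₂ k : ℕ) (hk : k ≤ min m₁ m₂) (hsum : m₁ + m₂ - k < n) :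
    (n : ℝ) * Sfun (1 : Matrix (Fin (n - 1)) (Fin (n - 1)) ℝ) m₁ m₂ k *
        Sfun A m₁ m₂ k =
      Sfun (1 : Matrix (Fin n) (Fin n) ℝ) m₁ m₂ k *
        ∑ γ ∈ Finset.univ.powersetCard (n - 1),
          Sfun (A.submatrix (Subtype.val : γ → Fin n) (Subtype.val : γ → Fin n)) m₁ m₂ k :=
  stmt_12_general A m₁ m₂ k hsum
end

section
/- Let A be an invertible n×n real matrix and let m, k be nonnegative integers with k ≤ m and 2m − k = n. Then S_{m,m,k}(A) = S_{n−m,n−m,0}(A⁻¹) · (det A)², and, if moreover k ≥ 1 and m ≤ n−1, S_{m+1,m−1,k}(A) = S_{n−m+1,n−m−1,0}(A⁻¹) · (det A)². -/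
open Finset Matrix

/-- Determinant of a matrix whose columns are those of `B` on `γ` and identity columns
elsewhere equals the principal minor of `B` on `γ`. -/
lemma det_ite_right {n : ℕ} (γ : Finset (Fin n)) (B : Matrix (Fin n) (Fin n) ℝ) :
    (Matrix.of fun i j => if j ∈ γ then B i j else (1 : Matrix (Fin n) (Fin n) ℝ) i j).det
      = pminor B γ := by
  classical
  unfold pminor
  rw [← Matrix.det_submatrix_equiv_self (Equiv.sumCompl (· ∈ γ))]
  have hM : (Matrix.of fun i j => if j ∈ γ then B i j
        else (1 : Matrix (Fin n) (Fin n) ℝ) i j).submatrix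
        (Equiv.sumCompl (· ∈ γ)) (Equiv.sumCompl (· ∈ γ))
      = Matrix.fromBlocks
        (B.submatrix ((↑) : γ → Fin n) ((↑) : γ → Fin n)) 0
        (B.submatrix ((↑) : {x // ¬ x ∈ γ} → Fin n) ((↑) : γ → Fin n)) 1 := by
    ext i j
    rcases i with i | i <;> rcases j with j | j <;>
      simp [Matrix.one_apply, j.2, Subtype.ext_iff]
    exact fun h => absurd (h ▸ i.2) j.2
  rw [hM, Matrix.det_fromBlocks_zero₁₂, Matrix.det_one, mul_one]

/-- Jacobi's identity for principal minors. -/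
lemma jacobi {n : ℕ} (A : Matrix (Fin n) (Fin n) ℝ) (hA : IsUnit A.det)
    (γ : Finset (Fin n)) : pminor A⁻¹ γ * A.det = pminor A γᶜ := by
  classical
  set M : Matrix (Fin n) (Fin n) ℝ :=
    Matrix.of fun i j => if j ∈ γ then A⁻¹ i j else (1 : Matrix (Fin n) (Fin n) ℝ) i j with hMdef
  have hM : M.det = pminor A⁻¹ γ := det_ite_right γ A⁻¹
  have hAM : A * M = Matrix.of fun i j =>
      if j ∈ γᶜ then A i j else (1 : Matrix (Fin n) (Fin n) ℝ) i j := by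
    ext i j
    by_cases h : j ∈ γ
    · calc (A * M) i j = (A * A⁻¹) i j := by simp [Matrix.mul_apply, hMdef, h]
        _ = _ := by rw [Matrix.mul_nonsing_inv A hA]; simp [h]
    · simp [Matrix.mul_apply, hMdef, h, Matrix.one_apply, mul_ite, mul_one, mul_zero,
        Finset.sum_ite_eq']
  have h2 : (A * M).det = pminor A γᶜ := by
    rw [hAM, det_ite_right γᶜ A]
  rw [← h2, Matrix.det_mul, hM, mul_comm]

lemma sum_powersetCard_compl {n m : ℕ} (hm : m ≤ n) (f : Finset (Fin n) → ℝ) :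
    ∑ γ ∈ Finset.univ.powersetCard (n - m), f γ
      = ∑ α ∈ Finset.univ.powersetCard m, f αᶜ := by
  refine Finset.sum_bij' (fun γ _ => γᶜ) (fun α _ => αᶜ) ?_ ?_ ?_ ?_ ?_
  · intro a ha
    rw [Finset.mem_powersetCard_univ] at *
    rw [Finset.card_compl, Fintype.card_fin, ha]
    omega
  · intro a ha
    rw [Finset.mem_powersetCard_univ] at *
    rw [Finset.card_compl, Fintype.card_fin, ha]
  · intro a _; exact compl_compl a
  · intro a _; exact compl_compl a
  · intro a _; rw [compl_compl]

lemma Sfun_comm {n : ℕ} (B : Matrix (Fin n) (Fin n) ℝ) (a b k : ℕ) :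
    Sfun B a b k = Sfun B b a k := by
  unfold Sfun
  rw [Finset.sum_comm]
  refine Finset.sum_congr rfl fun β _ => Finset.sum_congr rfl fun α _ => ?_
  rw [Finset.inter_comm, mul_comm]

lemma Sfun_compl_eq {n : ℕ} (A : Matrix (Fin n) (Fin n) ℝ) (hA : IsUnit A.det)
    (m₁ m₂ k : ℕ) (hm₁ : m₁ ≤ n) (hm₂ : m₂ ≤ n) (hk : m₁ + m₂ = n + k) :
    Sfun A m₁ m₂ k = Sfun A⁻¹ (n - m₁) (n - m₂) 0 * A.det ^ 2 := by
  unfold Sfun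
  rw [Finset.sum_mul, sum_powersetCard_compl hm₁]
  refine Finset.sum_congr rfl fun α hα => ?_
  rw [Finset.sum_mul, sum_powersetCard_compl hm₂]
  refine Finset.sum_congr rfl fun β hβ => ?_
  rw [Finset.mem_powersetCard_univ] at hα hβ
  rw [ite_mul, zero_mul]
  have hcond : (αᶜ ∩ βᶜ).card = 0 ↔ (α ∩ β).card = k := by
    rw [← Finset.compl_union, Finset.card_compl, Fintype.card_fin]
    have h1 := Finset.card_union_add_card_inter α β
    have h2 : (α ∪ β).card ≤ n := by
      simpa [Fintype.card_fin] using Finset.card_le_univ (α ∪ β)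
    omega
  by_cases h : (α ∩ β).card = k
  · rw [if_pos h, if_pos (hcond.mpr h)]
    have j1 := jacobi A hA αᶜ
    have j2 := jacobi A hA βᶜ
    rw [compl_compl] at j1 j2
    rw [← j1, ← j2]; ring
  · rw [if_neg h, if_neg (fun hc => h (hcond.mp hc))]

theorem stmt_13 {n : ℕ} (A : Matrix (Fin n) (Fin n) ℝ) (hA : IsUnit A.det)
    (m k : ℕ) (hk : k ≤ m) (hn : 2 * m - k = n) :
    Sfun A m m k = Sfun A⁻¹ (n - m) (n - m) 0 * A.det ^ 2 ∧
      (1 ≤ k → m ≤ n - 1 →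
        Sfun A (m + 1) (m - 1) k =
          Sfun A⁻¹ (n - m + 1) (n - m - 1) 0 * A.det ^ 2) := by
  constructor
  · exact Sfun_compl_eq A hA m m k (by omega) (by omega) (by omega)
  · intro h1 h2
    have e1 : n - m + 1 = n - (m - 1) := by omega
    have e2 : n - m - 1 = n - (m + 1) := by omega
    rw [e1, e2, Sfun_comm A⁻¹]
    exact Sfun_compl_eq A hA (m + 1) (m - 1) k (by omega) (by omega) (by omega)
end

section
/- Fix integers 1 ≤ m ≤ n. For every complex vector t = (t_α) indexed by the m-element subsets α of {1,…,n} satisfying Σ_α t_α = 0, one has Σ_{α,β} ( m − |α ∩ β| + 1 ) · conj(t_α) · t_β ≤ 0; that is, the Hermitian form with matrix ( m − |α∩β| + 1 )_{α,β} is negative semidefinite on the orthogonal complement of the all-ones vector. -/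
open scoped ComplexOrder

theorem stmt_15 {n : ℕ} (m : ℕ) (hm1 : 1 ≤ m) (hmn : m ≤ n)
    (t : Finset (Fin n) → ℂ)
    (ht : ∑ α ∈ Finset.univ.powersetCard m, t α = 0) :
    (∑ α ∈ Finset.univ.powersetCard m, ∑ β ∈ Finset.univ.powersetCard m,
        ((m : ℂ) - ((α ∩ β).card : ℂ) + 1) * (starRingEnd ℂ) (t α) * t β) ≤ 0 := by
  set S := (Finset.univ : Finset (Fin n)).powersetCard m with hS
  set g : Fin n → ℂ := fun i => ∑ α ∈ S, if i ∈ α then t α else 0 with hg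
  have hcard : ∀ α β : Finset (Fin n), ((α ∩ β).card : ℂ) =
      ∑ i : Fin n, (if i ∈ α then (1:ℂ) else 0) * (if i ∈ β then 1 else 0) := by
    intro α β
    have : ∀ i : Fin n, (if i ∈ α then (1:ℂ) else 0) * (if i ∈ β then 1 else 0)
        = if i ∈ α ∩ β then 1 else 0 := by
      intro i
      by_cases h1 : i ∈ α <;> by_cases h2 : i ∈ β <;>
        simp [h1, h2, Finset.mem_inter]
    rw [Finset.sum_congr rfl fun i _ => this i, Finset.sum_boole]
    congr 1
    rw [Finset.filter_mem_eq_inter, Finset.univ_inter]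
  have key : (∑ α ∈ S, ∑ β ∈ S,
        (((α ∩ β).card : ℂ)) * ((starRingEnd ℂ) (t α) * t β))
      = ∑ i : Fin n, (starRingEnd ℂ) (g i) * g i := by
    have step : ∀ α ∈ S, ∀ β ∈ S, (((α ∩ β).card : ℂ)) * ((starRingEnd ℂ) (t α) * t β)
        = ∑ i : Fin n, ((if i ∈ α then (starRingEnd ℂ) (t α) else 0) *
            (if i ∈ β then t β else 0)) := by
      intro α _ β _
      rw [hcard α β, Finset.sum_mul]
      refine Finset.sum_congr rfl fun i _ => ?_
      by_cases h1 : i ∈ α <;> by_cases h2 : i ∈ β <;> simp [h1, h2] <;> ring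
    calc (∑ α ∈ S, ∑ β ∈ S, (((α ∩ β).card : ℂ)) * ((starRingEnd ℂ) (t α) * t β))
        = ∑ α ∈ S, ∑ β ∈ S, ∑ i : Fin n, ((if i ∈ α then (starRingEnd ℂ) (t α) else 0) *
            (if i ∈ β then t β else 0)) := by
          refine Finset.sum_congr rfl fun α hα => Finset.sum_congr rfl fun β hβ => ?_
          exact step α hα β hβ
      _ = ∑ α ∈ S, ∑ i : Fin n, ∑ β ∈ S, ((if i ∈ α then (starRingEnd ℂ) (t α) else 0) *
            (if i ∈ β then t β else 0)) :=
          Finset.sum_congr rfl fun α _ => Finset.sum_comm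
      _ = ∑ i : Fin n, ∑ α ∈ S, ∑ β ∈ S, ((if i ∈ α then (starRingEnd ℂ) (t α) else 0) *
            (if i ∈ β then t β else 0)) := Finset.sum_comm
      _ = ∑ i : Fin n, (starRingEnd ℂ) (g i) * g i := by
          refine Finset.sum_congr rfl fun i _ => ?_
          rw [hg]
          simp only [map_sum, apply_ite, map_zero]
          rw [Finset.sum_mul]
          refine Finset.sum_congr rfl fun α _ => ?_
          simp [Finset.mul_sum, mul_ite, mul_zero]
  have expand : (∑ α ∈ S, ∑ β ∈ S,
        ((m : ℂ) - ((α ∩ β).card : ℂ) + 1) * (starRingEnd ℂ) (t α) * t β)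
      = ((m : ℂ) + 1) * ((starRingEnd ℂ) (∑ α ∈ S, t α) * (∑ β ∈ S, t β))
        - ∑ α ∈ S, ∑ β ∈ S, (((α ∩ β).card : ℂ)) * ((starRingEnd ℂ) (t α) * t β) := by
    rw [map_sum, Finset.sum_mul, Finset.mul_sum, ← Finset.sum_sub_distrib]
    refine Finset.sum_congr rfl fun α _ => ?_
    rw [Finset.mul_sum, Finset.mul_sum, ← Finset.sum_sub_distrib]
    refine Finset.sum_congr rfl fun β _ => ?_
    ring
  rw [expand, ht, key]
  simp only [map_zero, mul_zero, zero_mul, zero_sub]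
  rw [neg_nonpos]
  refine Finset.sum_nonneg fun i _ => ?_
  rw [mul_comm, Complex.mul_conj]
  exact Complex.zero_le_real.mpr (Complex.normSq_nonneg _)
end

section
/- Fix integers 1 ≤ m ≤ n. The Hermitian matrix indexed by the m-element subsets of {1,…,n}, whose (α,β) entry is 1 / ( m − |α ∩ β| + 1 ), is positive semidefinite: for every complex vector t = (t_α), Σ_{α,β} conj(t_α) · t_β / ( m − |α ∩ β| + 1 ) ≥ 0. -/
open scoped ComplexOrder

namespace Stmt16Aux

variable {n : ℕ}

noncomputable def e (α : Finset (Fin n)) (i : Fin n) : ℝ := if i ∈ α then -1 else 1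

noncomputable def c (n : ℕ) (S : Finset (Fin n)) : ℝ :=
  ∫ y in (0:ℝ)..1, 2 * y * (((1-y)/2)^S.card * ((1+y)/2)^(n - S.card))

lemma factor_lemma {ι : Type*} (P : Finset ι) (a b : ι → ℂ) (cc : ℂ) :
    cc * ((∑ α ∈ P, a α) * (∑ β ∈ P, b β)) = ∑ α ∈ P, ∑ β ∈ P, cc * a α * b β := by
  rw [Finset.sum_mul_sum, Finset.mul_sum]
  exact Finset.sum_congr rfl fun α _ => by
    rw [Finset.mul_sum]; exact Finset.sum_congr rfl fun β _ => by ring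

lemma c_nonneg (S : Finset (Fin n)) : 0 ≤ c n S := by
  apply intervalIntegral.integral_nonneg zero_le_one
  intro y hy
  have h0 : (0:ℝ) ≤ y := hy.1
  have h1 : y ≤ 1 := hy.2
  have : (0:ℝ) ≤ 1 - y := by linarith
  positivity

lemma prod_eq (y : ℝ) (α β : Finset (Fin n)) :
    ∏ i : Fin n, ((1-y)/2 * (e α i * e β i) + (1+y)/2)
      = y ^ ((α \ β).card + (β \ α).card) := by
  have h : ∀ i : Fin n, (1-y)/2 * (e α i * e β i) + (1+y)/2
      = if i ∈ (α \ β) ∪ (β \ α) then y else 1 := by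
    intro i
    simp only [e, Finset.mem_union, Finset.mem_sdiff]
    by_cases h1 : i ∈ α <;> by_cases h2 : i ∈ β <;> simp [h1, h2] <;> ring
  rw [Finset.prod_congr rfl fun i _ => h i]
  rw [Finset.prod_ite_mem, Finset.univ_inter, Finset.prod_const,
    Finset.card_union_of_disjoint (disjoint_sdiff_sdiff)]

lemma expand (y : ℝ) (α β : Finset (Fin n)) :
    ∑ S ∈ (Finset.univ : Finset (Fin n)).powerset,
      ((1-y)/2)^S.card * ((1+y)/2)^(n - S.card) * ∏ i ∈ S, (e α i * e β i)
      = y ^ ((α \ β).card + (β \ α).card) := by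
  rw [← prod_eq y α β, Finset.prod_add]
  apply Finset.sum_congr rfl
  intro S hS
  have hsub : S ⊆ Finset.univ := Finset.mem_powerset.mp hS
  have hcard : (Finset.univ \ S).card = n - S.card := by
    rw [Finset.card_sdiff_of_subset hsub, Finset.card_univ, Fintype.card_fin]
  rw [show (∏ i ∈ S, ((1-y)/2 * (e α i * e β i)))
      = ((1-y)/2)^S.card * ∏ i ∈ S, (e α i * e β i) by
    rw [Finset.prod_mul_distrib, Finset.prod_const], Finset.prod_const, hcard]
  ring

lemma coeff_sum (α β : Finset (Fin n)) (d : ℕ)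
    (hd : (α \ β).card + (β \ α).card = 2 * d) :
    ∑ S ∈ (Finset.univ : Finset (Fin n)).powerset,
      c n S * ∏ i ∈ S, (e α i * e β i) = 1 / (d + 1) := by
  have hint : ∀ S : Finset (Fin n), IntervalIntegrable
      (fun y => 2 * y * (((1-y)/2)^S.card * ((1+y)/2)^(n - S.card))
        * ∏ i ∈ S, (e α i * e β i)) MeasureTheory.volume 0 1 := by
    intro S
    apply Continuous.intervalIntegrable
    fun_prop
  have h1 : ∀ S : Finset (Fin n), c n S * ∏ i ∈ S, (e α i * e β i)
      = ∫ y in (0:ℝ)..1, 2 * y * (((1-y)/2)^S.card * ((1+y)/2)^(n - S.card))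
          * ∏ i ∈ S, (e α i * e β i) := by
    intro S
    rw [c, ← intervalIntegral.integral_mul_const]
  rw [Finset.sum_congr rfl fun S _ => h1 S, ← intervalIntegral.integral_finset_sum (fun S _ => hint S)]
  have h2 : ∀ y : ℝ, ∑ S ∈ (Finset.univ : Finset (Fin n)).powerset,
      2 * y * (((1-y)/2)^S.card * ((1+y)/2)^(n - S.card)) * ∏ i ∈ S, (e α i * e β i)
      = 2 * y ^ (2*d+1) := by
    intro y
    have := expand (n := n) y α β
    calc ∑ S ∈ (Finset.univ : Finset (Fin n)).powerset,
        2 * y * (((1-y)/2)^S.card * ((1+y)/2)^(n - S.card)) * ∏ i ∈ S, (e α i * e β i)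
        = 2 * y * ∑ S ∈ (Finset.univ : Finset (Fin n)).powerset,
            ((1-y)/2)^S.card * ((1+y)/2)^(n - S.card) * ∏ i ∈ S, (e α i * e β i) := by
          rw [Finset.mul_sum]; apply Finset.sum_congr rfl; intros; ring
      _ = 2 * y * y ^ (2*d) := by rw [this, hd]
      _ = 2 * y ^ (2*d+1) := by ring
  rw [intervalIntegral.integral_congr (g := fun y => 2 * y ^ (2*d+1)) (fun y _ => h2 y)]
  rw [intervalIntegral.integral_const_mul, integral_pow]
  push_cast
  rw [one_pow, zero_pow (by omega)]
  field_simp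
  ring

end Stmt16Aux

open Stmt16Aux

theorem stmt_16 {n : ℕ} (m : ℕ) (hm1 : 1 ≤ m) (hmn : m ≤ n)
    (t : Finset (Fin n) → ℂ) :
    0 ≤ ∑ α ∈ Finset.univ.powersetCard m, ∑ β ∈ Finset.univ.powersetCard m,
        (starRingEnd ℂ) (t α) * t β / ((m : ℂ) - ((α ∩ β).card : ℂ) + 1) := by
  have hterm : ∀ α ∈ Finset.univ.powersetCard m, ∀ β ∈ Finset.univ.powersetCard m,
      (starRingEnd ℂ) (t α) * t β / ((m : ℂ) - ((α ∩ β).card : ℂ) + 1)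
      = ∑ S ∈ (Finset.univ : Finset (Fin n)).powerset,
          ((c n S : ℂ)) * (((starRingEnd ℂ) (t α)) * ((∏ i ∈ S, e α i : ℝ) : ℂ))
            * (t β * ((∏ i ∈ S, e β i : ℝ) : ℂ)) := by
    intro α hα β hβ
    have hαc : α.card = m := (Finset.mem_powersetCard_univ.mp hα)
    have hβc : β.card = m := (Finset.mem_powersetCard_univ.mp hβ)
    have hk : (α ∩ β).card ≤ m := hαc ▸ Finset.card_le_card (Finset.inter_subset_left)
    set d := m - (α ∩ β).card with hddef
    have hd : (α \ β).card + (β \ α).card = 2 * d := by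
      have h1 : (α \ β).card = m - (α ∩ β).card := by
        rw [← Finset.sdiff_inter_self_left, Finset.card_sdiff_of_subset Finset.inter_subset_left, hαc]
      have h2 : (β \ α).card = m - (α ∩ β).card := by
        rw [← Finset.sdiff_inter_self_left, Finset.card_sdiff_of_subset Finset.inter_subset_left, hβc,
          Finset.inter_comm]
      omega
    have hden : (m : ℂ) - ((α ∩ β).card : ℂ) + 1 = ((d : ℝ) + 1 : ℝ) := by
      push_cast [hddef, Nat.cast_sub hk]
      ring
    rw [hden]
    have hcs := coeff_sum α β d hd
    have : ((starRingEnd ℂ) (t α) * t β) * ((1 / ((d:ℝ) + 1) : ℝ) : ℂ)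
        = ∑ S ∈ (Finset.univ : Finset (Fin n)).powerset,
          ((c n S : ℂ)) * (((starRingEnd ℂ) (t α)) * ((∏ i ∈ S, e α i : ℝ) : ℂ))
            * (t β * ((∏ i ∈ S, e β i : ℝ) : ℂ)) := by
      rw [← hcs]
      push_cast
      rw [Finset.mul_sum]
      apply Finset.sum_congr rfl
      intro S _
      rw [Finset.prod_mul_distrib]
      push_cast
      ring
    rw [← this]
    rw [div_eq_mul_inv]
    push_cast
    ring
  rw [Finset.sum_congr rfl fun α hα => Finset.sum_congr rfl fun β hβ => hterm α hα β hβ]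
  calc (0:ℂ) ≤ ∑ S ∈ (Finset.univ : Finset (Fin n)).powerset,
          ((c n S : ℂ)) * ((∑ α ∈ Finset.univ.powersetCard m,
              (starRingEnd ℂ) (t α) * ((∏ i ∈ S, e α i : ℝ) : ℂ)) *
            (∑ β ∈ Finset.univ.powersetCard m, t β * ((∏ i ∈ S, e β i : ℝ) : ℂ))) := by
        apply Finset.sum_nonneg
        intro S _
        set F := ∑ β ∈ Finset.univ.powersetCard m, t β * ((∏ i ∈ S, e β i : ℝ) : ℂ) with hF
        have hconj : (∑ α ∈ Finset.univ.powersetCard m,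
            (starRingEnd ℂ) (t α) * ((∏ i ∈ S, e α i : ℝ) : ℂ)) = (starRingEnd ℂ) F := by
          rw [hF, map_sum]
          exact Finset.sum_congr rfl fun α _ => by simp [map_mul, Complex.conj_ofReal]
        rw [hconj, ← Complex.normSq_eq_conj_mul_self]
        rw [show ((c n S : ℂ)) * ((Complex.normSq F : ℝ) : ℂ)
            = ((c n S * Complex.normSq F : ℝ) : ℂ) by push_cast; ring]
        exact Complex.zero_le_real.mpr (mul_nonneg (c_nonneg S) (Complex.normSq_nonneg F))
    _ = ∑ S ∈ (Finset.univ : Finset (Fin n)).powerset,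
          ∑ α ∈ Finset.univ.powersetCard m, ∑ β ∈ Finset.univ.powersetCard m,
            ((c n S : ℂ)) * (((starRingEnd ℂ) (t α)) * ((∏ i ∈ S, e α i : ℝ) : ℂ))
              * (t β * ((∏ i ∈ S, e β i : ℝ) : ℂ)) := by
        exact Finset.sum_congr rfl fun S _ => factor_lemma _ _ _ _
    _ = ∑ α ∈ Finset.univ.powersetCard m, ∑ β ∈ Finset.univ.powersetCard m,
          ∑ S ∈ (Finset.univ : Finset (Fin n)).powerset,
            ((c n S : ℂ)) * (((starRingEnd ℂ) (t α)) * ((∏ i ∈ S, e α i : ℝ) : ℂ))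
              * (t β * ((∏ i ∈ S, e β i : ℝ) : ℂ)) := by
        rw [Finset.sum_comm]
        exact Finset.sum_congr rfl fun α _ => Finset.sum_comm
end
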